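/- arXiv:1308.0844 — 4 statements merged into one kernel-verified Lean document; each statement's English description precedes it below -/
import Mathlib

section
/- Gavrilov's theorem: let A be an n×n real symmetric positive definite matrix and let m be an integer with 2 ≤ m < n. If every m×m principal submatrix of A is monotone — that is, for every strictly increasing map f : Fin m → Fin n the matrix (A i j)_{i,j ∈ range f} is invertible with all entries of its inverse nonnegative — then A itself is monotone (A is invertible and every entry of A⁻¹ is nonnegative). -/
open Matrix Finset

private lemma gav_sum_embed {n m : ℕ} (e : Fin m → Fin n)
    (x : Fin m → ℝ) (g : Fin n → ℝ) :
    ∑ a, (∑ i, if e i = a then x i else 0) * g a = ∑ i, x i * g (e i) := by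
  calc ∑ a, (∑ i, if e i = a then x i else 0) * g a
      = ∑ a, ∑ i, (if e i = a then x i * g a else 0) := by
        refine Finset.sum_congr rfl fun a _ => ?_
        rw [Finset.sum_mul]
        exact Finset.sum_congr rfl fun i _ => by split <;> simp
    _ = ∑ i, ∑ a, (if e i = a then x i * g a else 0) := Finset.sum_comm
    _ = ∑ i, x i * g (e i) := by
        refine Finset.sum_congr rfl fun i _ => ?_
        simp [Finset.sum_ite_eq]

private lemma gav_posDef_submatrix {n m : ℕ} {A : Matrix (Fin n) (Fin n) ℝ} (hA : A.PosDef)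
    (e : Fin m → Fin n) (he : Function.Injective e) : (A.submatrix e e).PosDef := by
  refine posDef_iff_dotProduct_mulVec.2 ⟨hA.1.submatrix e, fun x hx => ?_⟩
  set y : Fin n → ℝ := fun a => ∑ i, if e i = a then x i else 0 with hy
  have hy0 : y ≠ 0 := by
    obtain ⟨i, hi⟩ := Function.ne_iff.1 hx
    intro h
    apply hi
    have h2 := congrFun h (e i)
    simpa [hy, he.eq_iff] using h2
  have hq := (posDef_iff_dotProduct_mulVec.1 hA).2 hy0
  have key : dotProduct (star y) (A *ᵥ y) = dotProduct (star x) ((A.submatrix e e) *ᵥ x) := by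
    simp only [star_trivial]
    show ∑ a, y a * (A *ᵥ y) a = ∑ i, x i * ((A.submatrix e e) *ᵥ x) i
    calc ∑ a, y a * (A *ᵥ y) a
        = ∑ i, x i * (A *ᵥ y) (e i) := gav_sum_embed e x _
      _ = ∑ i, x i * ((A.submatrix e e) *ᵥ x) i := by
          refine Finset.sum_congr rfl fun i _ => ?_
          congr 1
          show ∑ b, A (e i) b * y b = ∑ j, A.submatrix e e i j * x j
          calc ∑ b, A (e i) b * y b = ∑ b, y b * A (e i) b := by
                simp [mul_comm]
            _ = ∑ j, x j * A (e i) (e j) := gav_sum_embed e x _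
            _ = ∑ j, A.submatrix e e i j * x j := by
                simp [Matrix.submatrix_apply, mul_comm]
  rw [key] at hq
  exact hq

private lemma gav_diag_pos {N : ℕ} {B : Matrix (Fin N) (Fin N) ℝ} (hB : B.PosDef) (a : Fin N) :
    0 < B a a := by
  have h := (gav_posDef_submatrix hB ![a] (fun i j _ => Subsingleton.elim i j)).det_pos
  rw [Matrix.det_fin_one] at h
  simpa using h

private lemma gav_minor_pos {N : ℕ} {B : Matrix (Fin N) (Fin N) ℝ} (hB : B.PosDef)
    {a c : Fin N} (h : a ≠ c) : B a c * B c a < B a a * B c c := by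
  have hinj : Function.Injective ![a, c] := by
    intro i j hij
    fin_cases i <;> fin_cases j <;> simp_all
  have hd := (gav_posDef_submatrix hB ![a, c] hinj).det_pos
  rw [Matrix.det_fin_two] at hd
  simp only [Matrix.submatrix_apply] at hd
  simp only [Matrix.cons_val_zero, Matrix.cons_val_one, Matrix.head_cons] at hd
  linarith

private lemma gav_scalar_contra (x p q bii bjj bkk : ℝ) (hx : x < 0)
    (dii : 0 < bii) (djj : 0 < bjj) (dkk : 0 < bkk)
    (c1 : 0 ≤ x * bkk - p * q) (c2 : 0 ≤ p * bjj - x * q) (c3 : 0 ≤ q * bii - x * p)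
    (mik : p * p < bii * bkk) (mjk : q * q < bjj * bkk) : False := by
  have hxk : x * bkk < 0 := mul_neg_of_neg_of_pos hx dkk
  have hpq : p * q < 0 := by linarith
  have hp0 : p ≠ 0 := by
    intro h0; rw [h0, zero_mul] at hpq; exact lt_irrefl _ hpq
  rcases lt_or_gt_of_ne hp0 with hp | hp
  · have hq : 0 < q := by nlinarith
    have hnb : 0 ≤ -(p * q) := le_of_lt (by linarith)
    have hnc : 0 ≤ -(p * bjj) := by nlinarith
    have P1 := mul_nonneg c1 hnc
    have P2 := mul_nonneg c2 hnb
    have P3 : 0 < (bjj * bkk - q * q) * (x * p) :=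
      mul_pos (by linarith) (mul_pos_of_neg_of_neg hx hp)
    nlinarith [P1, P2, P3]
  · have hq : q < 0 := by nlinarith
    have hnb : 0 ≤ -(p * q) := le_of_lt (by linarith)
    have hnc : 0 ≤ -(q * bii) := by nlinarith
    have P1 := mul_nonneg c1 hnc
    have P2 := mul_nonneg c3 hnb
    have P3 : 0 < (bii * bkk - p * p) * (x * q) :=
      mul_pos (by linarith) (mul_pos_of_neg_of_neg hx hq)
    nlinarith [P1, P2, P3]

private lemma gav_step {s : ℕ} (hs : 2 ≤ s) (A : Matrix (Fin (s+1)) (Fin (s+1)) ℝ)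
    (hsym : A.IsSymm) (hpd : A.PosDef)
    (h : ∀ k : Fin (s+1), ∀ i j, 0 ≤ (A.submatrix k.succAbove k.succAbove)⁻¹ i j) :
    ∀ i j, 0 ≤ A⁻¹ i j := by
  set B := A⁻¹ with hB
  have hdet : IsUnit A.det := isUnit_iff_ne_zero.2 hpd.det_pos.ne'
  have hABmul : A * B = 1 := Matrix.mul_nonsing_inv A hdet
  have hAB : ∀ a b, (∑ y, A a y * B y b) = if a = b then 1 else 0 := by
    intro a b
    have h2 := congrFun (congrFun hABmul a) b
    rwa [Matrix.mul_apply, Matrix.one_apply] at h2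
  have hBpd : B.PosDef := hpd.inv
  have hBsym : ∀ a b, B a b = B b a := by
    intro a b
    have h1 : Bᵀ = B := by
      rw [hB, Matrix.transpose_nonsing_inv, hsym]
    have h2 := congrFun (congrFun h1 a) b
    rw [Matrix.transpose_apply] at h2
    exact h2.symm
  have hcon : ∀ (k a b : Fin (s+1)), a ≠ k → b ≠ k →
      0 ≤ B a b * B k k - B a k * B k b := by
    intro k a b ha hb
    obtain ⟨i, rfl⟩ := Fin.exists_succAbove_eq ha
    obtain ⟨j, rfl⟩ := Fin.exists_succAbove_eq hb
    have hBkk : 0 < B k k := gav_diag_pos hBpd k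
    set e := k.succAbove with he
    set M : Matrix (Fin s) (Fin s) ℝ :=
      Matrix.of fun i j => (B (e i) (e j) * B k k - B (e i) k * B k (e j)) / B k k with hM
    have hmul : A.submatrix e e * M = 1 := by
      ext i j
      rw [Matrix.mul_apply, Matrix.one_apply]
      have h1 := hAB (e i) (e j)
      have h2 := hAB (e i) k
      rw [Fin.sum_univ_succAbove _ k] at h1 h2
      have hik : e i ≠ k := Fin.succAbove_ne k i
      rw [if_neg hik] at h2
      have hij : (e i = e j) ↔ (i = j) := (Fin.strictMono_succAbove k).injective.eq_iff
      have expand : ∑ x, A.submatrix e e i x * M x j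
          = ((∑ x, A (e i) (e x) * B (e x) (e j)) * B k k
            - (∑ x, A (e i) (e x) * B (e x) k) * B k (e j)) / B k k := by
        rw [Finset.sum_mul, Finset.sum_mul, ← Finset.sum_sub_distrib, Finset.sum_div]
        refine Finset.sum_congr rfl fun x _ => ?_
        simp only [hM, Matrix.of_apply, Matrix.submatrix_apply]
        field_simp
      rw [expand, div_eq_iff hBkk.ne']
      by_cases hij' : i = j
      · simp only [if_pos hij', if_pos (hij.mpr hij')] at h1 ⊢
        linear_combination B k k * h1 - B k (e j) * h2
      · simp only [if_neg hij', if_neg (fun hh => hij' (hij.mp hh))] at h1 ⊢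
        linear_combination B k k * h1 - B k (e j) * h2
    have hinv : (A.submatrix e e)⁻¹ = M := Matrix.inv_eq_right_inv hmul
    have h0 := h k i j
    rw [hinv] at h0
    have h3 := mul_nonneg h0 hBkk.le
    simp only [hM, Matrix.of_apply] at h3
    rwa [div_mul_cancel₀ _ hBkk.ne'] at h3
  intro i j
  rcases eq_or_ne i j with rfl | hij
  · exact (gav_diag_pos hBpd i).le
  by_contra hneg
  push_neg at hneg
  obtain ⟨k, hki, hkj⟩ : ∃ k : Fin (s+1), k ≠ i ∧ k ≠ j := by
    by_contra hk
    push_neg at hk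
    have hsub2 : (Finset.univ : Finset (Fin (s+1))) ⊆ {i, j} := by
      intro k _
      by_cases hki : k = i
      · simp [hki]
      · simp [hk k hki]
    have h1 := Finset.card_le_card hsub2
    rw [Finset.card_univ, Fintype.card_fin] at h1
    have h2 : ({i, j} : Finset (Fin (s+1))).card ≤ 2 :=
      le_trans (Finset.card_insert_le _ _) (by simp)
    omega
  have c1 := hcon k i j (Ne.symm hki) (Ne.symm hkj)
  have c2 := hcon j i k hij hkj
  have c3 := hcon i j k (Ne.symm hij) hki
  have mik := gav_minor_pos hBpd (Ne.symm hki : i ≠ k)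
  have mjk := gav_minor_pos hBpd (Ne.symm hkj : j ≠ k)
  have sik := hBsym i k
  have sjk := hBsym j k
  have sji := hBsym j i
  have dkk := gav_diag_pos hBpd k
  have dii := gav_diag_pos hBpd i
  have djj := gav_diag_pos hBpd j
  refine gav_scalar_contra (B i j) (B i k) (B k j) (B i i) (B j j) (B k k) hneg dii djj dkk
    (by linarith) (by rw [sjk] at c2; linarith) (by rw [sjk, sji] at c3; linarith)
    (by rw [← sik] at mik; linarith) (by rw [sjk] at mjk; linarith)

/-- Gavrilov's theorem: if `A` is a real symmetric positive definite matrix and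
all of its principal submatrices of some fixed order `m` (with `2 ≤ m < n`) are
monotone, then `A` is monotone. -/
theorem gavrilov_monotone_of_principal_submatrices
    (n m : ℕ) (hm : 2 ≤ m) (hmn : m < n)
    (A : Matrix (Fin n) (Fin n) ℝ) (hsym : A.IsSymm) (hpd : A.PosDef)
    (hsub : ∀ f : Fin m → Fin n, StrictMono f →
      IsUnit (A.submatrix f f).det ∧ ∀ i j, 0 ≤ (A.submatrix f f)⁻¹ i j) :
    IsUnit A.det ∧ ∀ i j, 0 ≤ A⁻¹ i j := by
  have aux : ∀ s, m ≤ s → ∀ g : Fin s → Fin n, StrictMono g →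
      ∀ i j, 0 ≤ (A.submatrix g g)⁻¹ i j := by
    intro s hs
    induction s, hs using Nat.le_induction with
    | base => exact fun g hg => (hsub g hg).2
    | succ s hs ih =>
      intro g hg
      have hpd' : (A.submatrix g g).PosDef := gav_posDef_submatrix hpd g hg.injective
      have hsym' : (A.submatrix g g).IsSymm := hsym.submatrix g
      refine gav_step (le_trans hm hs) _ hsym' hpd' fun k => ?_
      rw [Matrix.submatrix_submatrix]
      exact ih (g ∘ k.succAbove) (hg.comp (Fin.strictMono_succAbove k))
  constructor
  · exact isUnit_iff_ne_zero.2 hpd.det_pos.ne'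
  · have h := aux n (le_of_lt hmn) id strictMono_id
    simpa using h
end

section
/- Bouchon's theorem: let A be an n×n real matrix with A i i > 0 for all i and A i j ≤ 0 for all i ≠ j, which is irreducibly diagonally dominant: the directed graph on vertex set {1,…,n} with an edge i → j whenever A i j ≠ 0 is strongly connected, the quantities σ_i = (∑_{j ≠ i} |A i j|)/A i i satisfy σ_i ≤ 1 for every i, and σ_i < 1 for at least one i. Let d(i,j) denote the length of a shortest directed path from i to j in this graph (with d(i,i) = 0). Let E be an n×n real matrix with ∑_j E i j ≥ 0 for every i. Set m(A) = min_i A i i, η(A) = max over pairs (i,j) with A i j ≠ 0 of A i i/|A i j|, M = max over pairs (i,j) with E i j ≠ 0 of d(i,j), and C = 1/(η(A)^M · M · e), where e is Euler's number. If ‖E‖_∞ = max_i ∑_j |E i j| < C · m(A), then A + E is invertible and every entry of (A + E)⁻¹ is strictly positive. -/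
open Matrix Finset

/-- There is a directed path of length `k` from `i` to `j` in the graph of the
matrix `A` (an edge `i → j` whenever `A i j ≠ 0`). -/
def Matrix.HasPathOfLength {n : ℕ} (A : Matrix (Fin n) (Fin n) ℝ)
    (i j : Fin n) (k : ℕ) : Prop :=
  ∃ p : ℕ → Fin n, p 0 = i ∧ p k = j ∧ ∀ t < k, A (p t) (p (t + 1)) ≠ 0


set_option maxHeartbeats 1000000 in
/-- The key lemma: a nonnegative "supersolution" of `A + E` that vanishes
somewhere vanishes identically. -/
lemma bouchon_key {n : ℕ} (A E : Matrix (Fin n) (Fin n) ℝ)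
    (d : Fin n → Fin n → ℕ) (M : ℕ) (η δ₀ g Γ m ε : ℝ)
    (hdiag : ∀ i, 0 < A i i)
    (hoff : ∀ i j, i ≠ j → A i j ≤ 0)
    (hpath : ∀ i l, A.HasPathOfLength i l (d i l))
    (hd1 : ∀ i k, A i k ≠ 0 → d i k ≤ 1)
    (hdM : ∀ i l, E i l ≠ 0 → d i l ≤ M)
    (hM1 : 1 ≤ M)
    (hη1 : 1 ≤ η)
    (hηA : ∀ i k, A i k ≠ 0 → A i i ≤ η * |A i k|)
    (hm : ∀ i, m ≤ A i i)
    (hεE : ∀ i, ∑ l, |E i l| ≤ ε)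
    (hδ0 : 0 ≤ δ₀)
    (hεg : ε * g ≤ δ₀ * m)
    (hΓ : Γ = (η * (1 + δ₀)) ^ M)
    (hΓg : Γ < g)
    (hg2 : 2 ≤ g)
    (hrowsum : ∀ i, 0 ≤ ∑ k, (A i k + E i k))
    (φ : Fin n → ℝ) (hφ : ∀ i, 0 ≤ φ i)
    (hBφ : ∀ i, 0 ≤ ∑ k, (A i k + E i k) * φ k)
    (i0 : Fin n) (hz : φ i0 = 0) :
    ∀ j, φ j = 0 := by
  have hg0 : (0:ℝ) < g := by linarith
  have hη0 : (0:ℝ) < η := by linarith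
  have hX1 : (1:ℝ) ≤ η * (1 + δ₀) := by nlinarith
  have hX0 : (0:ℝ) < η * (1 + δ₀) := by nlinarith
  have hΓ1 : (1:ℝ) ≤ Γ := by
    rw [hΓ]
    calc (1:ℝ) = 1 ^ M := (one_pow M).symm
      _ ≤ (η * (1 + δ₀)) ^ M := pow_le_pow_left₀ zero_le_one hX1 M
  have hΓ0 : (0:ℝ) < Γ := by linarith
  -- the sliding-constant property
  set P : ℝ → Prop := fun c => ∀ i l, d i l ≤ M → φ l + c ≤ g * (φ i + c) with hP
  -- Step 1 : per-edge Harnack inequality, given P c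
  have step1 : ∀ c, 0 < c → P c → ∀ i k, A i k ≠ 0 →
      φ k + c ≤ (η * (1 + δ₀)) * (φ i + c) := by
    intro c hc hPc i k hik
    by_cases hk : k = i
    · subst hk
      nlinarith [hφ k]
    · have hψi : (0:ℝ) < φ i + c := by have := hφ i; linarith
      have hψk : (0:ℝ) ≤ φ k + c := by have := hφ k; linarith
      -- bound on the E-part of row i
      have hE : ∑ l, E i l * (φ l + c) ≤ ε * g * (φ i + c) := by
        have h1 : ∀ l, E i l * (φ l + c) ≤ |E i l| * (g * (φ i + c)) := by
          intro l
          by_cases hEl : E i l = 0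
          · simp [hEl]
          · have hψl : φ l + c ≤ g * (φ i + c) := hPc i l (hdM i l hEl)
            have h0l : (0:ℝ) ≤ φ l + c := by have := hφ l; linarith
            calc E i l * (φ l + c) ≤ |E i l| * (φ l + c) :=
                  mul_le_mul_of_nonneg_right (le_abs_self _) h0l
              _ ≤ |E i l| * (g * (φ i + c)) :=
                  mul_le_mul_of_nonneg_left hψl (abs_nonneg _)
        calc ∑ l, E i l * (φ l + c) ≤ ∑ l, |E i l| * (g * (φ i + c)) :=
              Finset.sum_le_sum (fun l _ => h1 l)
          _ = (∑ l, |E i l|) * (g * (φ i + c)) := by rw [← Finset.sum_mul]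
          _ ≤ ε * (g * (φ i + c)) :=
              mul_le_mul_of_nonneg_right (hεE i) (by positivity)
          _ = ε * g * (φ i + c) := by ring
      -- the row inequality for ψ = φ + c
      have hBψ : (0:ℝ) ≤ ∑ k', (A i k' + E i k') * (φ k' + c) := by
        have e1 : ∑ k', (A i k' + E i k') * (φ k' + c)
            = (∑ k', (A i k' + E i k') * φ k') + c * (∑ k', (A i k' + E i k')) := by
          rw [Finset.mul_sum, ← Finset.sum_add_distrib]
          exact Finset.sum_congr rfl (fun k' _ => by ring)
        rw [e1]
        have h2 := hBφ i
        have h3 := hrowsum i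
        nlinarith
      -- keep only the diagonal term and the k-term of the A-part
      have hsplit : ∑ k', A i k' * (φ k' + c)
          ≤ A i i * (φ i + c) + A i k * (φ k + c) := by
        have hpair : ∑ k' ∈ ({i, k} : Finset (Fin n)), A i k' * (φ k' + c)
            = A i i * (φ i + c) + A i k * (φ k + c) :=
          Finset.sum_pair (fun h => hk h.symm)
        rw [← hpair]
        have hneg : ∀ x ∈ (Finset.univ : Finset (Fin n)), x ∉ ({i, k} : Finset (Fin n)) →
            A i x * (φ x + c) ≤ 0 := by
          intro x _ hx
          have hxi : x ≠ i := by
            intro h; exact hx (by simp [h])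
          have hx0 : A i x ≤ 0 := hoff i x (fun h => hxi h.symm)
          have hx1 : (0:ℝ) ≤ φ x + c := by have := hφ x; linarith
          exact mul_nonpos_of_nonpos_of_nonneg hx0 hx1
        -- ∑ univ ≤ ∑ {i,k} since the remaining terms are ≤ 0
        have := Finset.sum_le_sum_of_subset_of_nonneg
          (f := fun k' => -(A i k' * (φ k' + c)))
          (Finset.subset_univ ({i, k} : Finset (Fin n)))
          (fun x hx hx2 => by
            have h := hneg x hx hx2
            simpa using neg_nonneg.mpr h)
        have e2 : ∑ k' ∈ ({i,k} : Finset (Fin n)), -(A i k' * (φ k' + c))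
            = -∑ k' ∈ ({i,k} : Finset (Fin n)), A i k' * (φ k' + c) := by
          rw [Finset.sum_neg_distrib]
        have e3 : ∑ k' ∈ (Finset.univ : Finset (Fin n)), -(A i k' * (φ k' + c))
            = -∑ k', A i k' * (φ k' + c) := by
          rw [Finset.sum_neg_distrib]
        rw [e2, e3, hpair] at this
        linarith
      have hsum_split : ∑ k', (A i k' + E i k') * (φ k' + c)
          = (∑ k', A i k' * (φ k' + c)) + ∑ k', E i k' * (φ k' + c) := by
        rw [← Finset.sum_add_distrib]
        exact Finset.sum_congr rfl (fun _ _ => by ring)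
      have habs : A i k = -|A i k| := by
        rw [abs_of_nonpos (hoff i k (fun h => hk h.symm))]; ring
      have hkey : |A i k| * (φ k + c) ≤ (1 + δ₀) * (A i i * (φ i + c)) := by
        rw [hsum_split] at hBψ
        rw [habs] at hsplit
        have h4 : ε * g * (φ i + c) ≤ δ₀ * m * (φ i + c) :=
          mul_le_mul_of_nonneg_right hεg hψi.le
        have h5 : δ₀ * m * (φ i + c) ≤ δ₀ * A i i * (φ i + c) :=
          mul_le_mul_of_nonneg_right
            (mul_le_mul_of_nonneg_left (hm i) hδ0) hψi.le
        nlinarith [hsplit, hE, hBψ]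
      have hak : (0:ℝ) < |A i k| := abs_pos.mpr hik
      have h6 : A i i ≤ η * |A i k| := hηA i k hik
      have h7 : |A i k| * (φ k + c) ≤ |A i k| * ((η * (1 + δ₀)) * (φ i + c)) := by
        calc |A i k| * (φ k + c) ≤ (1 + δ₀) * (A i i * (φ i + c)) := hkey
          _ ≤ (1 + δ₀) * ((η * |A i k|) * (φ i + c)) := by
              apply mul_le_mul_of_nonneg_left _ (by linarith : (0:ℝ) ≤ 1 + δ₀)
              exact mul_le_mul_of_nonneg_right h6 hψi.le
          _ = |A i k| * ((η * (1 + δ₀)) * (φ i + c)) := by ring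
      exact le_of_mul_le_mul_left h7 hak
  -- Step 2 : chained Harnack along paths
  have step2 : ∀ c, 0 < c → P c → ∀ len (i l : Fin n), A.HasPathOfLength i l len →
      φ l + c ≤ (η * (1 + δ₀)) ^ len * (φ i + c) := by
    intro c hc hPc len
    induction len with
    | zero =>
      intro i l hpl
      obtain ⟨p, h0, hk, _⟩ := hpl
      have : l = i := by rw [← h0, ← hk]
      subst this
      rw [pow_zero, one_mul]
    | succ k ih =>
      intro i l hpl
      obtain ⟨p, h0, hk1, hedge⟩ := hpl
      have hsub : A.HasPathOfLength i (p k) k :=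
        ⟨p, h0, rfl, fun t ht => hedge t (Nat.lt_succ_of_lt ht)⟩
      have h1 := ih i (p k) hsub
      have he' : A (p k) l ≠ 0 := by
        rw [← hk1]; exact hedge k (Nat.lt_succ_self k)
      have h2 := step1 c hc hPc (p k) l he'
      calc φ l + c ≤ (η * (1 + δ₀)) * (φ (p k) + c) := h2
        _ ≤ (η * (1 + δ₀)) * ((η * (1 + δ₀)) ^ k * (φ i + c)) :=
            mul_le_mul_of_nonneg_left h1 hX0.le
        _ = (η * (1 + δ₀)) ^ (k + 1) * (φ i + c) := by ring
  -- Step 3 : improvement from g to Γ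
  have step3 : ∀ c, 0 < c → P c → ∀ i l, d i l ≤ M →
      φ l + c ≤ Γ * (φ i + c) := by
    intro c hc hPc i l hdl
    have h1 := step2 c hc hPc (d i l) i l (hpath i l)
    have h2 : (η * (1 + δ₀)) ^ (d i l) ≤ (η * (1 + δ₀)) ^ M :=
      pow_le_pow_right₀ hX1 hdl
    have hψi : (0:ℝ) ≤ φ i + c := by have := hφ i; linarith
    calc φ l + c ≤ (η * (1 + δ₀)) ^ (d i l) * (φ i + c) := h1
      _ ≤ (η * (1 + δ₀)) ^ M * (φ i + c) := mul_le_mul_of_nonneg_right h2 hψi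
      _ = Γ * (φ i + c) := by rw [hΓ]
  -- Step 4 : P holds for every positive c
  have step4 : ∀ c, 0 < c → P c := by
    intro c hc
    by_contra hnc
    set K : ℝ := 1 + ∑ j, φ j with hK
    have hKφ : ∀ j, φ j ≤ K - 1 := by
      intro j
      have h1 : φ j ≤ ∑ j', φ j' :=
        Finset.single_le_sum (fun j' _ => hφ j') (Finset.mem_univ j)
      rw [hK]; linarith
    have hK1 : (1:ℝ) ≤ K := by
      have : (0:ℝ) ≤ ∑ j, φ j := Finset.sum_nonneg fun j _ => hφ j
      rw [hK]; linarith
    have hPK : ∀ c', K ≤ c' → P c' := by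
      intro c' hc' i l _
      have h1 := hKφ l
      have h2 := hφ i
      have hc'1 : (1:ℝ) ≤ c' := le_trans hK1 hc'
      nlinarith [mul_nonneg (by linarith : (0:ℝ) ≤ g - 2) (by linarith : (0:ℝ) ≤ φ i + c')]
    set N : Set ℝ := {c'' | 0 < c'' ∧ ¬ P c''} with hN
    have hNne : N.Nonempty := ⟨c, hc, hnc⟩
    have hNub : ∀ x ∈ N, x ≤ K := by
      intro x hx
      by_contra hxK
      push_neg at hxK
      exact hx.2 (hPK x hxK.le)
    have hbdd : BddAbove N := ⟨K, hNub⟩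
    set cs := sSup N with hcs
    have hccs : c ≤ cs := le_csSup hbdd ⟨hc, hnc⟩
    have hcs0 : 0 < cs := lt_of_lt_of_le hc hccs
    have hPgt : ∀ u, cs < u → P u := by
      intro u hu
      by_contra hnu
      have hmem : u ∈ N := ⟨lt_trans hcs0 hu, hnu⟩
      exact absurd (le_csSup hbdd hmem) (not_le.mpr hu)
    have hPcs : P cs := by
      intro i l hdl
      refine le_of_forall_pos_le_add ?_
      intro u hu
      have hug : 0 < u / g := div_pos hu hg0
      have h1 := hPgt (cs + u / g) (lt_add_of_pos_right _ hug) i l hdl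
      have h2 : g * (φ i + (cs + u / g)) = g * (φ i + cs) + u := by
        field_simp
        ring
      rw [h2] at h1
      linarith
    have hΓcs := step3 cs hcs0 hPcs
    have hb : Γ * cs / g < cs := by
      rw [div_lt_iff₀ hg0]
      nlinarith
    have hPb : ∀ u, Γ * cs / g < u → P u := by
      intro u hu i l hdl
      by_cases hcu : cs ≤ u
      · have h1 := hPcs i l hdl
        have e1 : g * (φ i + u) = g * (φ i + cs) + g * (u - cs) := by ring
        have e2 : u - cs ≤ g * (u - cs) := by
          nlinarith [mul_nonneg (by linarith : (0:ℝ) ≤ g - 1) (by linarith : (0:ℝ) ≤ u - cs)]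
        linarith
      · push_neg at hcu
        have h1 := hΓcs i l hdl
        have h1' : φ l + cs ≤ Γ * φ i + Γ * cs := by
          have e1 : Γ * (φ i + cs) = Γ * φ i + Γ * cs := by ring
          linarith
        have h2 : Γ * cs < g * u := by
          have := (div_lt_iff₀ hg0).mp hu
          linarith
        have h3 : Γ * φ i ≤ g * φ i := mul_le_mul_of_nonneg_right hΓg.le (hφ i)
        have e1 : g * (φ i + u) = g * φ i + g * u := by ring
        linarith
    have hfin : cs ≤ Γ * cs / g := by
      apply csSup_le hNne
      intro x hx
      by_contra hxb
      push_neg at hxb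
      exact hx.2 (hPb x hxb)
    linarith
  -- Step 5 : the limit c → 0
  have step5 : ∀ i l, d i l ≤ M → φ l ≤ Γ * φ i := by
    intro i l hdl
    refine le_of_forall_pos_le_add ?_
    intro u hu
    have huΓ : 0 < u / Γ := div_pos hu hΓ0
    have h1 := step3 (u / Γ) huΓ (step4 _ huΓ) i l hdl
    have h2 : Γ * (φ i + u / Γ) = Γ * φ i + u := by
      field_simp
    rw [h2] at h1
    linarith
  -- Step 6 : propagation of zeros
  have hedge0 : ∀ i k, A i k ≠ 0 → φ i = 0 → φ k = 0 := by
    intro i k hik hzi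
    have hdik : d i k ≤ M := le_trans (hd1 i k hik) hM1
    have h1 := step5 i k hdik
    rw [hzi, mul_zero] at h1
    exact le_antisymm h1 (hφ k)
  intro j
  obtain ⟨p, hp0, hpk, hpe⟩ := hpath i0 j
  have hall : ∀ t, t ≤ d i0 j → φ (p t) = 0 := by
    intro t
    induction t with
    | zero => intro _; rw [hp0]; exact hz
    | succ s ih =>
      intro hts
      have h1 : φ (p s) = 0 := ih (by omega)
      exact hedge0 (p s) (p (s + 1)) (hpe s (by omega)) h1
  have := hall (d i0 j) le_rfl
  rw [hpk] at this
  exact this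

/-- Bouchon's theorem: let `A` be an irreducibly diagonally dominant M-matrix
(positive diagonal, nonpositive off-diagonal entries, strongly connected graph,
`σ i ≤ 1` for all `i` and `σ i < 1` for some `i`), and let `E` have nonnegative
row sums. If `‖E‖∞ < C ⬝ m(A)` where `C = 1 / (η(A)^M ⬝ M ⬝ e)`, then `A + E`
is invertible and every entry of `(A + E)⁻¹` is strictly positive. -/
theorem bouchon_perturbation
    (n : ℕ) (hn : 0 < n) (A E : Matrix (Fin n) (Fin n) ℝ)
    (hdiag : ∀ i, 0 < A i i)
    (hoff : ∀ i j, i ≠ j → A i j ≤ 0)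
    (hconn : ∀ i j : Fin n, ∃ k, A.HasPathOfLength i j k)
    (hdd : ∀ i, (∑ j ∈ Finset.univ.filter (fun j => j ≠ i), |A i j|) / A i i ≤ 1)
    (hsdd : ∃ i, (∑ j ∈ Finset.univ.filter (fun j => j ≠ i), |A i j|) / A i i < 1)
    (d : Fin n → Fin n → ℕ)
    (hd : ∀ i j, d i j = sInf {k : ℕ | A.HasPathOfLength i j k})
    (hErow : ∀ i, 0 ≤ ∑ j, E i j)
    (mA : ℝ) (hmA : mA = ⨅ i, A i i)
    (η : ℝ) (hη : η = sSup {x : ℝ | ∃ i j, A i j ≠ 0 ∧ x = A i i / |A i j|})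
    (M : ℕ) (hM : M = sSup {k : ℕ | ∃ i j, E i j ≠ 0 ∧ k = d i j})
    (C : ℝ) (hC : C = 1 / (η ^ M * M * Real.exp 1))
    (hnorm : (⨆ i, ∑ j, |E i j|) < C * mA) :
    IsUnit (A + E).det ∧ ∀ i j, 0 < (A + E)⁻¹ i j := by
  have hne : Nonempty (Fin n) := ⟨⟨0, hn⟩⟩
  set i₀ : Fin n := ⟨0, hn⟩ with hi₀
  -- minimum of the diagonal
  have hmle : ∀ i, mA ≤ A i i := by
    intro i
    rw [hmA]
    exact ciInf_le (Finite.bddBelow_range _) i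
  have hm0 : 0 < mA := by
    obtain ⟨imin, _, hmin⟩ :=
      Finset.exists_min_image Finset.univ (fun i => A i i) ⟨i₀, Finset.mem_univ i₀⟩
    have h1 : A imin imin ≤ mA := by
      rw [hmA]
      exact le_ciInf (fun j => hmin j (Finset.mem_univ j))
    linarith [hdiag imin]
  -- the ∞-norm of E
  set ε := ⨆ i, ∑ j, |E i j| with hεdef
  have hεrow : ∀ i, ∑ j, |E i j| ≤ ε := by
    intro i
    rw [hεdef]
    exact le_ciSup (f := fun i => ∑ j, |E i j|) (Finite.bddAbove_range _) i
  have hε0 : (0:ℝ) ≤ ε :=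
    le_trans (Finset.sum_nonneg fun j _ => abs_nonneg _) (hεrow i₀)
  -- properties of η
  have hηbdd : BddAbove {x : ℝ | ∃ i j, A i j ≠ 0 ∧ x = A i i / |A i j|} := by
    apply Set.Finite.bddAbove
    apply Set.Finite.subset
      (Set.finite_range (fun p : Fin n × Fin n => A p.1 p.1 / |A p.1 p.2|))
    rintro x ⟨i, j, _, rfl⟩
    exact ⟨(i, j), rfl⟩
  have hη1 : (1:ℝ) ≤ η := by
    rw [hη]
    apply le_csSup hηbdd
    exact ⟨i₀, i₀, (hdiag i₀).ne', by
      rw [abs_of_pos (hdiag i₀), div_self (hdiag i₀).ne']⟩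
  have hηA : ∀ i k, A i k ≠ 0 → A i i ≤ η * |A i k| := by
    intro i k hik
    have h1 : A i i / |A i k| ≤ η := by
      rw [hη]
      exact le_csSup hηbdd ⟨i, k, hik, rfl⟩
    have h2 : (0:ℝ) < |A i k| := abs_pos.mpr hik
    calc A i i = (A i i / |A i k|) * |A i k| := by field_simp
      _ ≤ η * |A i k| := mul_le_mul_of_nonneg_right h1 h2.le
  -- paths and distances
  have hpath : ∀ i l, A.HasPathOfLength i l (d i l) := by
    intro i l
    rw [hd]
    exact Nat.sInf_mem (hconn i l)
  have hd1 : ∀ i k, A i k ≠ 0 → d i k ≤ 1 := by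
    intro i k hik
    rw [hd]
    refine Nat.sInf_le ⟨fun t => if t = 0 then i else k, by simp, by simp, ?_⟩
    intro t ht
    have ht0 : t = 0 := by omega
    subst ht0
    simpa using hik
  -- M ≥ 1
  have hM1 : 1 ≤ M := by
    by_contra hM0
    have hMz : M = 0 := by omega
    rw [hMz] at hC
    simp at hC
    rw [hC] at hnorm
    rw [zero_mul] at hnorm
    linarith
  have hM0R : (0:ℝ) < (M:ℝ) := by exact_mod_cast hM1
  -- distances on the support of E are at most M
  have hdMbdd : BddAbove {k : ℕ | ∃ i j, E i j ≠ 0 ∧ k = d i j} := by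
    apply Set.Finite.bddAbove
    apply Set.Finite.subset (Set.finite_range fun p : Fin n × Fin n => d p.1 p.2)
    rintro x ⟨i, j, _, rfl⟩
    exact ⟨(i, j), rfl⟩
  have hdM : ∀ i l, E i l ≠ 0 → d i l ≤ M := by
    intro i l hEl
    rw [hM]
    exact le_csSup hdMbdd ⟨i, l, hEl, rfl⟩
  -- numeric quantities
  have hηM1 : (1:ℝ) ≤ η ^ M := by
    calc (1:ℝ) = 1 ^ M := (one_pow M).symm
      _ ≤ η ^ M := pow_le_pow_left₀ zero_le_one hη1 M
  have he2 : (2:ℝ) < Real.exp 1 := by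
    have := Real.exp_one_gt_d9
    norm_num at this ⊢
    linarith
  set g : ℝ := Real.exp 1 * η ^ M with hgdef
  have hg0 : (0:ℝ) < g := by
    have := Real.exp_pos 1
    nlinarith
  have hg2 : (2:ℝ) ≤ g := by nlinarith [Real.exp_pos 1]
  set δ₀ : ℝ := ε * g / mA with hδdef
  have hδ0 : (0:ℝ) ≤ δ₀ := div_nonneg (mul_nonneg hε0 hg0.le) hm0.le
  have hεg : ε * g ≤ δ₀ * mA := by
    rw [hδdef, div_mul_cancel₀ _ hm0.ne']
  have hδM : δ₀ * M < 1 := by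
    have hX0 : (0:ℝ) < η ^ M * (M:ℝ) * Real.exp 1 := by
      have := Real.exp_pos 1
      nlinarith
    have hCval : C * mA = mA / (η ^ M * (M:ℝ) * Real.exp 1) := by
      rw [hC]; ring
    have h1 : ε < mA / (η ^ M * (M:ℝ) * Real.exp 1) := by
      rw [← hCval]; exact hnorm
    have h2 : ε * (η ^ M * (M:ℝ) * Real.exp 1) < mA := (lt_div_iff₀ hX0).mp h1
    rw [hδdef, hgdef]
    rw [div_mul_eq_mul_div, div_lt_one hm0]
    calc ε * (Real.exp 1 * η ^ M) * (M:ℝ)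
        = ε * (η ^ M * (M:ℝ) * Real.exp 1) := by ring
      _ < mA := h2
  set Γ : ℝ := (η * (1 + δ₀)) ^ M with hΓdef
  have hΓg : Γ < g := by
    rw [hΓdef, hgdef, mul_pow]
    have h1 : (1 + δ₀) ^ M ≤ Real.exp δ₀ ^ M := by
      apply pow_le_pow_left₀ (by linarith)
      linarith [Real.add_one_le_exp δ₀]
    have h2 : Real.exp δ₀ ^ M = Real.exp ((M:ℝ) * δ₀) := (Real.exp_nat_mul δ₀ M).symm
    have h3 : Real.exp ((M:ℝ) * δ₀) < Real.exp 1 := by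
      apply Real.exp_lt_exp.mpr
      rw [mul_comm]
      exact hδM
    have hp : (0:ℝ) < η ^ M := by linarith
    calc η ^ M * (1 + δ₀) ^ M ≤ η ^ M * Real.exp δ₀ ^ M :=
          mul_le_mul_of_nonneg_left h1 hp.le
      _ = η ^ M * Real.exp ((M:ℝ) * δ₀) := by rw [h2]
      _ < η ^ M * Real.exp 1 := by
          exact mul_lt_mul_of_pos_left h3 hp
      _ = Real.exp 1 * η ^ M := by ring
  -- row sums of A and of A + E
  have hrowA : ∀ i, 0 ≤ ∑ k, A i k := by
    intro i
    have h1 : ∑ j ∈ Finset.univ.filter (fun j => j ≠ i), |A i j| ≤ A i i :=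
      (div_le_one (hdiag i)).mp (hdd i)
    have hfe : Finset.univ.filter (fun j => j ≠ i) = Finset.univ.erase i := by
      ext x
      simp [Finset.mem_erase, and_comm]
    have h2 : ∑ k, A i k = A i i + ∑ j ∈ Finset.univ.erase i, A i j :=
      (Finset.add_sum_erase _ _ (Finset.mem_univ i)).symm
    have h3 : ∑ j ∈ Finset.univ.erase i, A i j
        = -∑ j ∈ Finset.univ.erase i, |A i j| := by
      rw [← Finset.sum_neg_distrib]
      apply Finset.sum_congr rfl
      intro j hj
      have hji : j ≠ i := (Finset.mem_erase.mp hj).1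
      rw [abs_of_nonpos (hoff i j (fun h => hji h.symm))]
      ring
    rw [hfe] at h1
    rw [h2, h3]
    linarith
  have hrowsum : ∀ i, 0 ≤ ∑ k, (A i k + E i k) := by
    intro i
    rw [Finset.sum_add_distrib]
    exact add_nonneg (hrowA i) (hErow i)
  -- the strictly dominant row
  obtain ⟨is, hs⟩ := hsdd
  have hstrict : 0 < ∑ k, (A is k + E is k) := by
    have h1 : ∑ j ∈ Finset.univ.filter (fun j => j ≠ is), |A is j| < A is is :=
      (div_lt_one (hdiag is)).mp hs
    have hfe : Finset.univ.filter (fun j => j ≠ is) = Finset.univ.erase is := by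
      ext x
      simp [Finset.mem_erase, and_comm]
    have h2 : ∑ k, A is k = A is is + ∑ j ∈ Finset.univ.erase is, A is j :=
      (Finset.add_sum_erase _ _ (Finset.mem_univ is)).symm
    have h3 : ∑ j ∈ Finset.univ.erase is, A is j
        = -∑ j ∈ Finset.univ.erase is, |A is j| := by
      rw [← Finset.sum_neg_distrib]
      apply Finset.sum_congr rfl
      intro j hj
      have hji : j ≠ is := (Finset.mem_erase.mp hj).1
      rw [abs_of_nonpos (hoff is j (fun h => hji h.symm))]
      ring
    rw [hfe] at h1
    rw [Finset.sum_add_distrib]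
    have h4 : 0 < ∑ k, A is k := by rw [h2, h3]; linarith
    linarith [hErow is]
  -- the key lemma, instantiated
  have hKEY : ∀ (φ : Fin n → ℝ), (∀ i, 0 ≤ φ i) →
      (∀ i, 0 ≤ ∑ k, (A i k + E i k) * φ k) → (∃ i0, φ i0 = 0) →
      ∀ j, φ j = 0 := by
    rintro φ h1 h2 ⟨i0, h3⟩
    exact bouchon_key A E d M η δ₀ g Γ mA ε hdiag hoff hpath hd1 hdM hM1 hη1 hηA
      hmle hεrow hδ0 hεg hΓdef hΓg hg2 hrowsum φ h1 h2 i0 h3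
  -- monotonicity
  have hmono : ∀ x : Fin n → ℝ,
      (∀ i, 0 ≤ ∑ k, (A i k + E i k) * x k) → ∀ i, 0 ≤ x i := by
    intro x hx
    obtain ⟨j0, _, hmin⟩ :=
      Finset.exists_min_image Finset.univ x ⟨i₀, Finset.mem_univ i₀⟩
    by_cases h0 : 0 ≤ x j0
    · intro i
      exact le_trans h0 (hmin i (Finset.mem_univ i))
    · push_neg at h0
      exfalso
      set μ := -x j0 with hμ
      have hμ0 : 0 < μ := by rw [hμ]; linarith
      have hall := hKEY (fun i => x i + μ)
        (fun i => by
          have := hmin i (Finset.mem_univ i)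
          linarith)
        (fun i => by
          have e1 : ∑ k, (A i k + E i k) * (x k + μ)
              = (∑ k, (A i k + E i k) * x k) + μ * ∑ k, (A i k + E i k) := by
            rw [Finset.mul_sum, ← Finset.sum_add_distrib]
            exact Finset.sum_congr rfl fun _ _ => by ring
          rw [e1]
          have h2 := hx i
          have h3 := mul_nonneg hμ0.le (hrowsum i)
          linarith)
        ⟨j0, by rw [hμ]; ring⟩
      have hxc : ∀ j, x j = -μ := by
        intro j
        have := hall j
        linarith
      have h1 : ∑ k, (A is k + E is k) * x k = -μ * ∑ k, (A is k + E is k) := by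
        rw [Finset.mul_sum]
        apply Finset.sum_congr rfl
        intro k _
        rw [hxc k]
        ring
      have h2 := hx is
      rw [h1] at h2
      nlinarith [hstrict, hμ0]
  -- conversion between mulVec and explicit sums
  have hconv : ∀ (w : Fin n → ℝ) (i : Fin n),
      ((A + E).mulVec w) i = ∑ k, (A i k + E i k) * w k := by
    intro w i
    simp [Matrix.mulVec, dotProduct, Matrix.add_apply]
  -- determinant is nonzero
  have hdet : (A + E).det ≠ 0 := by
    intro hd0
    obtain ⟨v, hv0, hv⟩ := Matrix.exists_mulVec_eq_zero_iff.mpr hd0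
    have h1 : ∀ i, 0 ≤ v i := by
      apply hmono
      intro i
      rw [← hconv v i, hv]
      simp
    have h2 : ∀ i, 0 ≤ -v i := by
      apply hmono (fun k => -v k)
      intro i
      have e1 : ∑ k, (A i k + E i k) * (-v k) = -∑ k, (A i k + E i k) * v k := by
        rw [← Finset.sum_neg_distrib]
        exact Finset.sum_congr rfl fun _ _ => by ring
      rw [e1, ← hconv v i, hv]
      simp
    refine hv0 (funext fun i => ?_)
    have ha := h1 i
    have hb := h2 i
    simp only [Pi.zero_apply]
    linarith
  have hunit : IsUnit (A + E).det := isUnit_iff_ne_zero.mpr hdet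
  refine ⟨hunit, ?_⟩
  intro i j
  have hBB : (A + E) * (A + E)⁻¹ = 1 := Matrix.mul_nonsing_inv _ hunit
  have hcol : ∀ i' : Fin n,
      ∑ k, (A i' k + E i' k) * (A + E)⁻¹ k j = (1 : Matrix (Fin n) (Fin n) ℝ) i' j := by
    intro i'
    calc ∑ k, (A i' k + E i' k) * (A + E)⁻¹ k j
        = ∑ k, (A + E) i' k * (A + E)⁻¹ k j := by
          apply Finset.sum_congr rfl
          intro k _
          rw [Matrix.add_apply]
      _ = ((A + E) * (A + E)⁻¹) i' j := (Matrix.mul_apply).symm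
      _ = (1 : Matrix (Fin n) (Fin n) ℝ) i' j := by rw [hBB]
  have hone : ∀ i' : Fin n, (0:ℝ) ≤ (1 : Matrix (Fin n) (Fin n) ℝ) i' j := by
    intro i'
    rw [Matrix.one_apply]
    split <;> norm_num
  have hxnn : ∀ i', 0 ≤ (A + E)⁻¹ i' j := by
    apply hmono (fun k => (A + E)⁻¹ k j)
    intro i'
    rw [hcol i']
    exact hone i'
  by_contra hpos
  push_neg at hpos
  have hxi : (A + E)⁻¹ i j = 0 := le_antisymm hpos (hxnn i)
  have hall := hKEY (fun k => (A + E)⁻¹ k j) hxnn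
    (fun i' => by rw [hcol i']; exact hone i') ⟨i, hxi⟩
  have h1 := hcol j
  rw [Matrix.one_apply_eq] at h1
  have h2 : ∑ k, (A j k + E j k) * (A + E)⁻¹ k j = 0 := by
    apply Finset.sum_eq_zero
    intro k _
    rw [show (A + E)⁻¹ k j = (0:ℝ) from hall k]
    ring
  rw [h2] at h1
  norm_num at h1
end

section
/- Let s, t, d be positive integers with d ≤ s ≤ t and t ≥ 2, and let A be the (s+t)×(s+t) real block matrix A = [[(t+d)·I_s, −J_{s,t}], [−J_{t,s}, (s+d)·I_t]], where I_k is the k×k identity and J_{p,q} the p×q all-ones matrix. Then A is invertible and the smallest entry of A⁻¹ equals s/(d(s+d)(s+t+d)). -/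
open Matrix Finset

private lemma aux_sum1 {n : ℕ} (i j : Fin n) (p q : ℝ) :
    (∑ x : Fin n, if x = j then (if i = x then p else 0) else (if i = x then q else 0))
      = if i = j then p else q := by
  have h : ∀ x : Fin n, (if x = j then (if i = x then p else 0) else (if i = x then q else 0))
      = (if i = x then (if x = j then p else q) else 0) := by
    intro x; by_cases h1 : i = x <;> by_cases h2 : x = j <;> simp [h1, h2]
  simp_rw [h]
  simp [Finset.sum_ite_eq]

private lemma aux_sum2 {n : ℕ} (j : Fin n) (u v : ℝ) :
    (∑ x : Fin n, if x = j then u else v) = (n : ℝ) * v + (u - v) := by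
  have h : ∀ x : Fin n, (if x = j then u else v) = v + (if x = j then u - v else 0) :=
    fun x => by split_ifs <;> ring
  simp_rw [h]
  rw [Finset.sum_add_distrib, Finset.sum_const, Finset.sum_ite_eq', Finset.card_univ,
    Fintype.card_fin]
  simp [nsmul_eq_mul]

/-- For positive integers `d ≤ s ≤ t` with `t ≥ 2`, the block matrix
`A = [[(t+d)·I, -J], [-J, (s+d)·I]]` is invertible and the smallest entry of
`A⁻¹` is `s / (d (s+d) (s+t+d))`. -/
theorem block_matrix_inverse_min_entry
    (s t d : ℕ) (hd : 0 < d) (hds : d ≤ s) (hst : s ≤ t) (ht : 2 ≤ t)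
    (A : Matrix (Fin s ⊕ Fin t) (Fin s ⊕ Fin t) ℝ)
    (hA : A = Matrix.fromBlocks
      (((t : ℝ) + (d : ℝ)) • (1 : Matrix (Fin s) (Fin s) ℝ))
      (-(Matrix.of fun (_ : Fin s) (_ : Fin t) => (1 : ℝ)))
      (-(Matrix.of fun (_ : Fin t) (_ : Fin s) => (1 : ℝ)))
      (((s : ℝ) + (d : ℝ)) • (1 : Matrix (Fin t) (Fin t) ℝ))) :
    IsUnit A.det ∧
      (⨅ i, ⨅ j, A⁻¹ i j) =
        (s : ℝ) / ((d : ℝ) * ((s : ℝ) + (d : ℝ)) * ((s : ℝ) + (t : ℝ) + (d : ℝ))) := by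
  have hD : (0:ℝ) < d := by exact_mod_cast hd
  have hS : (0:ℝ) < s := by exact_mod_cast lt_of_lt_of_le hd hds
  have hT : (0:ℝ) < t := by exact_mod_cast lt_of_lt_of_le (lt_of_lt_of_le hd hds) hst
  have hST : (s:ℝ) ≤ t := by exact_mod_cast hst
  set D := (d:ℝ) with hD'
  set S := (s:ℝ) with hS'
  set T := (t:ℝ) with hT'
  have hTD : T + D ≠ 0 := by positivity
  have hSD : S + D ≠ 0 := by positivity
  have hD0 : D ≠ 0 := ne_of_gt hD
  have hSTDp : (0:ℝ) < S + T + D := by positivity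
  have hSTD : S + T + D ≠ 0 := ne_of_gt hSTDp
  set a : ℝ := 1/(T+D) with ha'
  set e : ℝ := 1/(S+D) with he'
  set c : ℝ := 1/(D*(S+T+D)) with hc'
  set b : ℝ := T/((T+D)*(D*(S+T+D))) with hb'
  set f : ℝ := S/(D*(S+D)*(S+T+D)) with hf'
  have ha : (0:ℝ) < a := by rw [ha']; positivity
  have he : (0:ℝ) < e := by rw [he']; positivity
  have hc : (0:ℝ) < c := by rw [hc']; positivity
  have hb : (0:ℝ) < b := by rw [hb']; positivity
  have hf : (0:ℝ) < f := by rw [hf']; positivity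
  have hfc : f ≤ c := by
    rw [hf', hc', div_le_div_iff₀ (by positivity) (by positivity)]
    nlinarith [mul_pos hD hSTDp, mul_pos (mul_pos hD hD) hSTDp]
  have hfb : f ≤ b := by
    rw [hf', hb', div_le_div_iff₀ (by positivity) (by positivity)]
    nlinarith [mul_le_mul_of_nonneg_right hST hD.le, mul_pos hD hSTDp,
      mul_nonneg (mul_nonneg hD.le hD.le) hSTDp.le]
  set B : Matrix (Fin s ⊕ Fin t) (Fin s ⊕ Fin t) ℝ := Matrix.of fun i j =>
    match i, j with
    | .inl i, .inl j => if i = j then a + b else b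
    | .inl _, .inr _ => c
    | .inr _, .inl _ => c
    | .inr i, .inr j => if i = j then e + f else f
    with hB
  have hAB : A * B = 1 := by
    ext i j
    cases i with
    | inl i => cases j with
      | inl j =>
        simp only [hA, hB, Matrix.mul_apply, Fintype.sum_sum_type, Matrix.one_apply,
          Matrix.fromBlocks_apply₁₁, Matrix.fromBlocks_apply₁₂, Matrix.smul_apply,
          Matrix.of_apply, smul_eq_mul, mul_ite, ite_mul, zero_mul, mul_one, mul_zero, Matrix.neg_apply,
          neg_mul, one_mul, Finset.sum_neg_distrib, Finset.sum_const, Finset.card_univ,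
          Fintype.card_fin, nsmul_eq_mul, Sum.inl.injEq]
        rw [aux_sum1, ← hT']
        split_ifs <;> simp only [ha', hb', hc', he', hf'] <;> field_simp <;> ring
      | inr j =>
        simp only [hA, hB, Matrix.mul_apply, Fintype.sum_sum_type, Matrix.one_apply,
          Matrix.fromBlocks_apply₁₁, Matrix.fromBlocks_apply₁₂, Matrix.smul_apply,
          Matrix.of_apply, smul_eq_mul, mul_ite, ite_mul, zero_mul, mul_one, mul_zero, Matrix.neg_apply,
          neg_mul, one_mul, Sum.inl.injEq, Finset.sum_ite_eq, Finset.mem_univ, if_true, reduceCtorEq, if_false]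
        rw [aux_sum2, ← hT']
        simp only [ha', hb', hc', he', hf']; field_simp; ring
    | inr i => cases j with
      | inl j =>
        simp only [hA, hB, Matrix.mul_apply, Fintype.sum_sum_type, Matrix.one_apply,
          Matrix.fromBlocks_apply₂₁, Matrix.fromBlocks_apply₂₂, Matrix.smul_apply,
          Matrix.of_apply, smul_eq_mul, mul_ite, ite_mul, zero_mul, mul_one, mul_zero, Matrix.neg_apply,
          neg_mul, one_mul, Sum.inr.injEq, Finset.sum_ite_eq, Finset.mem_univ, if_true, reduceCtorEq, if_false]
        rw [aux_sum2, ← hS']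
        simp only [ha', hb', hc', he', hf']; field_simp; ring
      | inr j =>
        simp only [hA, hB, Matrix.mul_apply, Fintype.sum_sum_type, Matrix.one_apply,
          Matrix.fromBlocks_apply₂₁, Matrix.fromBlocks_apply₂₂, Matrix.smul_apply,
          Matrix.of_apply, smul_eq_mul, mul_ite, ite_mul, zero_mul, mul_one, mul_zero, Matrix.neg_apply,
          neg_mul, one_mul, Finset.sum_const, Finset.card_univ, Fintype.card_fin,
          nsmul_eq_mul, Sum.inr.injEq]
        rw [aux_sum1, ← hS']
        split_ifs <;> simp only [ha', hb', hc', he', hf'] <;> field_simp <;> ring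
  have hdet : IsUnit A.det := Matrix.isUnit_det_of_right_inverse hAB
  have hinv : A⁻¹ = B := Matrix.inv_eq_right_inv hAB
  refine ⟨hdet, ?_⟩
  rw [hinv]
  have hlow : ∀ i j, f ≤ B i j := by
    intro i j
    cases i with
    | inl i => cases j with
      | inl j =>
        simp only [hB, Matrix.of_apply]
        split_ifs
        · exact le_add_of_nonneg_of_le ha.le hfb
        · exact hfb
      | inr j => exact hfc
    | inr i => cases j with
      | inl j => exact hfc
      | inr j =>
        simp only [hB, Matrix.of_apply]
        split_ifs
        · exact le_add_of_nonneg_left he.le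
        · exact le_rfl
  have h0t : (0:ℕ) < t := by omega
  haveI : Nonempty (Fin t) := ⟨⟨0, by omega⟩⟩
  haveI : Nonempty (Fin s ⊕ Fin t) := ⟨Sum.inr ⟨0, by omega⟩⟩
  have h1t : (1:ℕ) < t := by omega
  apply le_antisymm
  · calc (⨅ i, ⨅ j, B i j) ≤ ⨅ j, B (Sum.inr ⟨0, h0t⟩) j :=
        ciInf_le (Set.finite_range _).bddBelow _
      _ ≤ B (Sum.inr ⟨0, h0t⟩) (Sum.inr ⟨1, h1t⟩) :=
        ciInf_le (Set.finite_range _).bddBelow _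
      _ = f := by simp [hB]
  · exact le_ciInf fun i => le_ciInf fun j => hlow i j
end

section
/- Let A be an invertible n×n real matrix whose inverse b = A⁻¹ has nonnegative entries and strictly positive row sums r_i = ∑_j b_{ij} and column sums c_j = ∑_i b_{ij}. Let Σ = ∑_{i,j} b_{ij}, let B_A = min_{i,j} b_{ij}/(r_i c_j), assume B_A · Σ < 1, and set v = B_A/(1 − B_A Σ). Then A + vJ (J the all-ones matrix) is invertible, (A + vJ)⁻¹ = A⁻¹ − B_A · r cᵀ, and every entry of (A + vJ)⁻¹ is nonnegative. -/
open Matrix Finset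

/-- Core step of the main theorem: if `A⁻¹` is nonnegative with strictly
positive row sums `r` and column sums `c`, `S` is the sum of all entries of
`A⁻¹`, `B` is the Buffoni number of `A` with `B * S < 1`, and
`v = B / (1 - B * S)`, then `A + v J` is invertible,
`(A + v J)⁻¹ = A⁻¹ - B • r cᵀ`, and `(A + v J)⁻¹` is entrywise nonnegative. -/
theorem add_buffoni_allOnes_monotone
    (n : ℕ) (A : Matrix (Fin n) (Fin n) ℝ) (hA : IsUnit A.det)
    (hpos : ∀ i j, 0 ≤ A⁻¹ i j)
    (r : Fin n → ℝ) (hr : ∀ i, r i = ∑ j, A⁻¹ i j) (hrpos : ∀ i, 0 < r i)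
    (c : Fin n → ℝ) (hc : ∀ j, c j = ∑ i, A⁻¹ i j) (hcpos : ∀ j, 0 < c j)
    (S : ℝ) (hS : S = ∑ i, ∑ j, A⁻¹ i j)
    (B : ℝ) (hB : B = ⨅ i, ⨅ j, A⁻¹ i j / (r i * c j))
    (hBS : B * S < 1)
    (v : ℝ) (hv : v = B / (1 - B * S)) :
    IsUnit (A + v • (Matrix.of fun (_ _ : Fin n) => (1 : ℝ))).det ∧
      (A + v • (Matrix.of fun (_ _ : Fin n) => (1 : ℝ)))⁻¹ =
        A⁻¹ - B • Matrix.of (fun i j => r i * c j) ∧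
      ∀ i j, 0 ≤ (A + v • (Matrix.of fun (_ _ : Fin n) => (1 : ℝ)))⁻¹ i j := by
  set e : Matrix (Fin n) (Fin n) ℝ := Matrix.of fun (_ _ : Fin n) => (1 : ℝ) with he
  set X : Matrix (Fin n) (Fin n) ℝ := Matrix.of (fun i j => r i * c j) with hXdef
  have hden : (0:ℝ) < 1 - B * S := by linarith
  have hX : X = A⁻¹ * e * A⁻¹ := by
    ext i j
    simp [hXdef, he, mul_apply, hr, hc, Finset.sum_mul, Finset.mul_sum]
  have hAX : A * X = e * A⁻¹ := by
    rw [hX, ← Matrix.mul_assoc, ← Matrix.mul_assoc, Matrix.mul_nonsing_inv _ hA,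
      Matrix.one_mul]
  have heAe : e * A⁻¹ * e = S • e := by
    ext i j
    simp only [mul_apply, he, Matrix.smul_apply, Matrix.of_apply, one_mul, mul_one,
      smul_eq_mul]
    rw [hS]
    exact Finset.sum_comm ..

  have heX : e * X = S • (e * A⁻¹) := by
    rw [hX, ← Matrix.mul_assoc e, ← Matrix.mul_assoc e, heAe, Matrix.smul_mul]
  have hcoef : v - B - v * B * S = 0 := by
    have := hden.ne'
    field_simp [hv]
    linear_combination (by rw [hv]; exact div_mul_cancel₀ _ this : v * (1 - B * S) = B)
  have key : (A + v • e) * (A⁻¹ - B • X) = 1 := by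
    rw [Matrix.add_mul, Matrix.mul_sub, Matrix.mul_sub, Matrix.mul_nonsing_inv _ hA,
      Matrix.mul_smul, hAX, Matrix.smul_mul, Matrix.smul_mul, Matrix.mul_smul, heX]
    have h2 : v • (B • (S • (e * A⁻¹))) = (v * B * S) • (e * A⁻¹) := by
      rw [smul_smul, smul_smul, mul_assoc]
    rw [h2]
    have : (1 : Matrix (Fin n) (Fin n) ℝ) - B • (e * A⁻¹) +
        (v • (e * A⁻¹) - (v * B * S) • (e * A⁻¹)) =
        1 + (v - B - v * B * S) • (e * A⁻¹) := by
      module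
    rw [this, hcoef, zero_smul, add_zero]
  have hunit : IsUnit (A + v • e).det := Matrix.isUnit_det_of_right_inverse key
  have hinv : (A + v • e)⁻¹ = A⁻¹ - B • X := Matrix.inv_eq_right_inv key
  refine ⟨hunit, hinv, ?_⟩
  intro i j
  rw [hinv]
  have hp : (0:ℝ) < r i * c j := mul_pos (hrpos i) (hcpos j)
  have hBle : B ≤ A⁻¹ i j / (r i * c j) := by
    rw [hB]
    refine le_trans (ciInf_le (Finite.bddBelow_range _) i) ?_
    exact ciInf_le (Finite.bddBelow_range _) j
  have : B * (r i * c j) ≤ A⁻¹ i j := (le_div_iff₀ hp).mp hBle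
  simp only [Matrix.sub_apply, Matrix.smul_apply, hXdef, Matrix.of_apply, smul_eq_mul]
  linarith
end
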